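/- arXiv:1406.5484 — 2 statements merged into one kernel-verified Lean document; each statement's English description precedes it below -/
import Mathlib

section
/- Let ζ be a Poisson process on Y with finite intensity measure M, let (X_i) be i.i.d. with distribution M(·)/M(Y), let Z be Bernoulli(p) independent of everything, and set ζ_{n,p} = ζ + 1(Z=1)·Σ_{i=1}^n δ_{X_i}. Then dTV(ζ, ζ_{n,p}) ≤ p and dKR(ζ, ζ_{n,p}) ≥ np. In particular, with p_n = 1/√n, dTV(ζ, ζ_{n,p_n}) → 0 while dKR(ζ, ζ_{n,p_n}) → ∞ as n → ∞. -/
open MeasureTheory ProbabilityTheory Filter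
open scoped ENNReal NNReal Classical

/-- Total variation distance between two (counting) measures. -/
noncomputable def measureTV {Y : Type*} [MeasurableSpace Y] (μ ν : Measure Y) : ℝ :=
  ⨆ A : {A : Set Y // MeasurableSet A ∧ μ A ≠ ⊤ ∧ ν A ≠ ⊤},
    |(μ A.1).toReal - (ν A.1).toReal|

/-- The Kantorovich–Rubinstein distance between two distributions of point processes. -/
noncomputable def dKR {Y : Type*} [MeasurableSpace Y] (Q₁ Q₂ : Measure (Measure Y)) : ℝ≥0∞ :=
  ⨅ C : {C : Measure (Measure Y × Measure Y) //
      C.map Prod.fst = Q₁ ∧ C.map Prod.snd = Q₂},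
    ∫⁻ p, ENNReal.ofReal (measureTV p.1 p.2) ∂C.1

/-- Total variation distance between two point processes. -/
noncomputable def ppTV {Ω Y : Type*} [MeasurableSpace Ω] [MeasurableSpace Y]
    (P : Measure Ω) (ζ₁ ζ₂ : Ω → Measure Y) : ℝ :=
  ⨆ A : {A : Set (Measure Y) // MeasurableSet A},
    |(P (ζ₁ ⁻¹' A.1)).toReal - (P (ζ₂ ⁻¹' A.1)).toReal|

/-- `ζ` is a Poisson process with finite intensity measure `M`. -/
def IsPoissonProcess {Ω Y : Type*} [MeasurableSpace Ω] [MeasurableSpace Y]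
    (P : Measure Ω) (ζ : Ω → Measure Y) (M : Measure Y) : Prop :=
  (∀ A : Set Y, MeasurableSet A → M A ≠ ⊤ → ∀ n : ℕ,
      P {ω | ζ ω A = n}
        = ENNReal.ofReal (Real.exp (-(M A).toReal) * (M A).toReal ^ n / n.factorial)) ∧
  (∀ (m : ℕ) (A : Fin m → Set Y), (∀ i, MeasurableSet (A i)) →
      (Pairwise fun i j => Disjoint (A i) (A j)) →
      iIndepFun (fun i ω => ζ ω (A i)) P)

/-!
The processes `ζ` and `ζ_{n,p}` coincide off the event `{Z = 1}` of probability `p`, which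
bounds their total variation distance by `p`. On the other hand the total variation distance
of two finite counting measures dominates the difference of their total masses, so every
coupling of the two laws costs at least `E ζ_{n,p}(Y) - E ζ(Y) = n p`; this subtraction is
legitimate because `E ζ(Y) = M(Y)` is finite, by the mean of the Poisson distribution.
-/

namespace ProbabilityTheory

lemma tsum_measure_singleton_eq_one {α : Type*} [MeasurableSpace α] [Countable α]
    [MeasurableSingletonClass α] (μ : Measure α) [IsProbabilityMeasure μ] :
    ∑' a, μ {a} = 1 := by
  simpa using Measure.tsum_indicator_apply_singleton μ Set.univ .univ

lemma lintegral_natCast_poissonMeasure (r : ℝ≥0) : ∫⁻ n, (n : ℝ≥0∞) ∂poissonMeasure r = r := by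
  have hshift : ∀ k : ℕ, ((k + 1 : ℕ) : ℝ≥0∞) * poissonMeasure r {k + 1}
      = r * poissonMeasure r {k} := fun k => by
    rw [poissonMeasure_singleton, poissonMeasure_singleton, ← ENNReal.ofReal_natCast,
      ← ENNReal.ofReal_coe_nnreal, ← ENNReal.ofReal_mul (by positivity),
      ← ENNReal.ofReal_mul (by positivity), Nat.factorial_succ]
    congr 1
    push_cast
    field_simp
    ring
  rw [lintegral_countable', tsum_eq_zero_add' ENNReal.summable]
  simp only [Nat.cast_zero, zero_mul, zero_add, hshift, ENNReal.tsum_mul_left,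
    tsum_measure_singleton_eq_one, mul_one]

lemma lintegral_eq_lintegral_natCast_of_measure_eq {Ω : Type*} [MeasurableSpace Ω]
    {P : Measure Ω} {μ : Measure ℕ} [IsProbabilityMeasure P] [IsProbabilityMeasure μ]
    {N : Ω → ℝ≥0∞} (hN : Measurable N) (hlaw : ∀ k : ℕ, P {ω | N ω = k} = μ {k}) :
    ∫⁻ ω, N ω ∂P = ∫⁻ k, (k : ℝ≥0∞) ∂μ := by
  set E : ℕ → Set Ω := fun k => {ω | N ω = k}
  have hEmeas : ∀ k, MeasurableSet (E k) := fun k => hN (measurableSet_singleton _)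
  have hEdisj : Pairwise (Function.onFun Disjoint E) := fun i j hij =>
    Set.disjoint_left.2 fun ω (hi : N ω = i) (hj : N ω = j) =>
      hij (by exact_mod_cast hi.symm.trans hj)
  have hfull : ∀ᵐ ω ∂P, ω ∈ ⋃ k, E k := by
    rw [ae_iff_measure_eq (p := (· ∈ ⋃ k, E k)) (MeasurableSet.iUnion hEmeas).nullMeasurableSet,
      Set.ofPred_mem_eq, measure_univ, measure_iUnion hEdisj hEmeas]
    simpa only [E, hlaw] using tsum_measure_singleton_eq_one μ
  calc ∫⁻ ω, N ω ∂P = ∫⁻ ω in ⋃ k, E k, N ω ∂P := by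
        rw [Measure.restrict_eq_self_of_ae_mem hfull]
    _ = ∑' k : ℕ, k * μ {k} := by
      rw [lintegral_iUnion hEmeas hEdisj]
      congr 1 with k
      rw [setLIntegral_congr_fun (hEmeas k) fun ω (hω : N ω = k) => hω, setLIntegral_const, hlaw]
    _ = ∫⁻ k, (k : ℝ≥0∞) ∂μ := (lintegral_countable' _).symm

lemma IsPoissonProcess.lintegral_apply {Ω Y : Type*} [MeasurableSpace Ω] [MeasurableSpace Y]
    {P : Measure Ω} [IsProbabilityMeasure P] {ζ : Ω → Measure Y} {M : Measure Y}
    (hζ : IsPoissonProcess P ζ M) (hζmeas : Measurable ζ) {A : Set Y} (hA : MeasurableSet A)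
    (hMA : M A ≠ ⊤) : ∫⁻ ω, ζ ω A ∂P = M A := by
  rw [lintegral_eq_lintegral_natCast_of_measure_eq (N := fun ω => ζ ω A)
      (μ := poissonMeasure (M A).toNNReal) ((Measure.measurable_coe hA).comp hζmeas) fun k => by
        rw [hζ.1 A hA hMA, poissonMeasure_singleton]; rfl,
    lintegral_natCast_poissonMeasure, ENNReal.coe_toNNReal hMA]

end ProbabilityTheory

section Distances

variable {Y : Type*} [MeasurableSpace Y]

lemma measure_univ_sub_le_measureTV {μ ν : Measure Y} (hμ : μ Set.univ ≠ ⊤)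
    (hν : ν Set.univ ≠ ⊤) : ν Set.univ - μ Set.univ ≤ ENNReal.ofReal (measureTV μ ν) := by
  have hbdd : BddAbove (Set.range fun A : {A : Set Y // MeasurableSet A ∧ μ A ≠ ⊤ ∧ ν A ≠ ⊤} =>
      |(μ A.1).toReal - (ν A.1).toReal|) := by
    refine ⟨(μ Set.univ).toReal + (ν Set.univ).toReal, ?_⟩
    rintro _ ⟨A, rfl⟩
    have hμA := ENNReal.toReal_mono hμ (measure_mono (Set.subset_univ A.1))
    have hνA := ENNReal.toReal_mono hν (measure_mono (Set.subset_univ A.1))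
    exact abs_sub_le_of_nonneg_of_le ENNReal.toReal_nonneg (by linarith [(ν Set.univ).toReal_nonneg])
      ENNReal.toReal_nonneg (by linarith [(μ Set.univ).toReal_nonneg])
  have huniv : |(μ Set.univ).toReal - (ν Set.univ).toReal| ≤ measureTV μ ν :=
    le_ciSup hbdd ⟨Set.univ, .univ, hμ, hν⟩
  rw [← ENNReal.ofReal_toReal hμ, ← ENNReal.ofReal_toReal hν,
    ← ENNReal.ofReal_sub _ ENNReal.toReal_nonneg]
  exact ENNReal.ofReal_le_ofReal ((le_abs_self _).trans ((abs_sub_comm _ _).trans_le huniv))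

lemma lintegral_measure_univ_sub_le_dKR {Q₁ Q₂ : Measure (Measure Y)}
    (h₁ : ∫⁻ μ, μ Set.univ ∂Q₁ ≠ ⊤) (h₂ : ∫⁻ μ, μ Set.univ ∂Q₂ ≠ ⊤) :
    ∫⁻ μ, μ Set.univ ∂Q₂ - ∫⁻ μ, μ Set.univ ∂Q₁ ≤ dKR Q₁ Q₂ := by
  have hmass : Measurable fun μ : Measure Y => μ Set.univ := Measure.measurable_coe .univ
  refine le_iInf ?_
  rintro ⟨C, rfl, rfl⟩
  rw [lintegral_map hmass measurable_fst] at h₁ ⊢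
  rw [lintegral_map hmass measurable_snd] at h₂ ⊢
  calc ∫⁻ q, q.2 Set.univ ∂C - ∫⁻ q, q.1 Set.univ ∂C
      ≤ ∫⁻ q, q.2 Set.univ - q.1 Set.univ ∂C := lintegral_sub_le _ _ (hmass.comp measurable_fst)
    _ ≤ ∫⁻ q, ENNReal.ofReal (measureTV q.1 q.2) ∂C := by
      refine lintegral_mono_ae ?_
      filter_upwards [ae_lt_top (hmass.comp measurable_fst) h₁,
        ae_lt_top (hmass.comp measurable_snd) h₂] with q hq₁ hq₂
      exact measure_univ_sub_le_measureTV hq₁.ne hq₂.ne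

variable {Ω : Type*} [MeasurableSpace Ω]

lemma ppTV_le_measureReal_of_eq_of_notMem (P : Measure Ω) [IsFiniteMeasure P]
    {ζ₁ ζ₂ : Ω → Measure Y} {E : Set Ω} (h : ∀ ω ∉ E, ζ₁ ω = ζ₂ ω) :
    ppTV P ζ₁ ζ₂ ≤ P.real E := by
  have key : ∀ {ξ₁ ξ₂ : Ω → Measure Y}, (∀ ω ∉ E, ξ₁ ω = ξ₂ ω) → ∀ A : Set (Measure Y),
      P.real (ξ₁ ⁻¹' A) - P.real (ξ₂ ⁻¹' A) ≤ P.real E := fun {ξ₁ ξ₂} hξ A => by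
    have hsub : ξ₁ ⁻¹' A ⊆ ξ₂ ⁻¹' A ∪ E := fun ω hω => by
      by_cases hωE : ω ∈ E
      · exact Or.inr hωE
      · exact Or.inl (show ξ₂ ω ∈ A from hξ ω hωE ▸ hω)
    linarith [measureReal_mono hsub |>.trans (measureReal_union_le (μ := P) _ _)]
  exact Real.iSup_le (fun A => abs_sub_le_iff.2 ⟨key h A.1, key (fun ω hω => (h ω hω).symm) A.1⟩)
    measureReal_nonneg

end Distances

section PerturbedProcess

variable {Ω Y : Type*} [MeasurableSpace Y]

noncomputable def perturbedProcess (ζ : Ω → Measure Y) (X : ℕ → Ω → Y) (Z : Ω → Bool) (n : ℕ)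
    (ω : Ω) : Measure Y :=
  ζ ω + if Z ω = true then ∑ i ∈ Finset.range n, Measure.dirac (X i ω) else 0

variable {ζ : Ω → Measure Y} {X : ℕ → Ω → Y} {Z : Ω → Bool} {n : ℕ}

lemma perturbedProcess_of_not {ω : Ω} (h : ¬Z ω = true) : perturbedProcess ζ X Z n ω = ζ ω := by
  rw [perturbedProcess, if_neg h, add_zero]

lemma perturbedProcess_apply_univ (ω : Ω) : perturbedProcess ζ X Z n ω Set.univ
    = ζ ω Set.univ + {ω | Z ω = true}.indicator (fun _ => (n : ℝ≥0∞)) ω := by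
  by_cases h : Z ω = true <;> simp [perturbedProcess, h]

variable [MeasurableSpace Ω]

lemma measurable_perturbedProcess (hζ : Measurable ζ) (hX : ∀ i, Measurable (X i))
    (hZ : Measurable Z) : Measurable (perturbedProcess ζ X Z n) :=
  hζ.add <| Measurable.ite (hZ (measurableSet_singleton true))
    (Finset.measurable_sum _ fun i _ => Measure.measurable_dirac.comp (hX i)) measurable_const

lemma lintegral_perturbedProcess_univ (P : Measure Ω) (hζ : Measurable ζ) (hZ : Measurable Z) :
    ∫⁻ ω, perturbedProcess ζ X Z n ω Set.univ ∂P
      = ∫⁻ ω, ζ ω Set.univ ∂P + n * P {ω | Z ω = true} := by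
  simp_rw [perturbedProcess_apply_univ]
  rw [lintegral_add_left (f := fun ω => ζ ω Set.univ) ((Measure.measurable_coe .univ).comp hζ),
    lintegral_indicator_const (s := {ω | Z ω = true}) (hZ (measurableSet_singleton true))]

lemma natCast_mul_le_dKR_map_perturbedProcess {P : Measure Ω} [IsFiniteMeasure P]
    (hζ : Measurable ζ) (hX : ∀ i, Measurable (X i)) (hZ : Measurable Z)
    (hfin : ∫⁻ ω, ζ ω Set.univ ∂P ≠ ⊤) :
    n * P {ω | Z ω = true} ≤ dKR (P.map ζ) (P.map (perturbedProcess ζ X Z n)) := by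
  have hmass : Measurable fun μ : Measure Y => μ Set.univ := Measure.measurable_coe .univ
  rw [← lintegral_map hmass hζ] at hfin
  have hmass_np : ∫⁻ μ, μ Set.univ ∂P.map (perturbedProcess ζ X Z n)
      = ∫⁻ μ, μ Set.univ ∂P.map ζ + n * P {ω | Z ω = true} := by
    rw [lintegral_map hmass (measurable_perturbedProcess hζ hX hZ), lintegral_map hmass hζ,
      lintegral_perturbedProcess_univ P hζ hZ]
  calc (n : ℝ≥0∞) * P {ω | Z ω = true}
      = ∫⁻ μ, μ Set.univ ∂P.map (perturbedProcess ζ X Z n) - ∫⁻ μ, μ Set.univ ∂P.map ζ := by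
        rw [hmass_np, ENNReal.add_sub_cancel_left hfin]
    _ ≤ _ := lintegral_measure_univ_sub_le_dKR hfin
        (hmass_np ▸ ENNReal.add_ne_top.2 ⟨hfin, by finiteness⟩)

end PerturbedProcess

theorem tv_vs_dKR_example_general {Ω Y : Type*} [MeasurableSpace Ω] [MeasurableSpace Y]
    (P : Measure Ω) [IsProbabilityMeasure P]
    (M : Measure Y) [IsFiniteMeasure M]
    (ζ : Ω → Measure Y) (hζmeas : Measurable ζ) (hζ : IsPoissonProcess P ζ M)
    (X : ℕ → Ω → Y) (hXmeas : ∀ i, Measurable (X i))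
    (p : ℕ → ℝ) (hp : ∀ n, 0 < p n ∧ p n ≤ 1)
    (Z : ℕ → Ω → Bool) (hZmeas : ∀ n, Measurable (Z n))
    (hZlaw : ∀ n, P {ω | Z n ω = true} = ENNReal.ofReal (p n))
    (ζnp : ℕ → Ω → Measure Y)
    (hζnp : ∀ n ω, ζnp n ω
      = ζ ω + (if Z n ω = true then ∑ i ∈ Finset.range n, Measure.dirac (X i ω) else 0)) :
    (∀ n, ppTV P ζ (ζnp n) ≤ p n) ∧
    (∀ n, ENNReal.ofReal (n * p n) ≤ dKR (P.map ζ) (P.map (ζnp n))) ∧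
    ((∀ n, p n = 1 / Real.sqrt n) →
      (Tendsto (fun n => ppTV P ζ (ζnp n)) atTop (nhds 0) ∧
       Tendsto (fun n => dKR (P.map ζ) (P.map (ζnp n))) atTop (nhds ⊤))) := by
  obtain rfl : ζnp = fun n => perturbedProcess ζ X (Z n) n := funext₂ hζnp
  have hTV : ∀ n, ppTV P ζ (perturbedProcess ζ X (Z n) n) ≤ p n := fun n => by
    have hpZ : P.real {ω | Z n ω = true} = p n := by
      rw [measureReal_def, hZlaw, ENNReal.toReal_ofReal (hp n).1.le]
    exact hpZ ▸ ppTV_le_measureReal_of_eq_of_notMem P fun ω hω => (perturbedProcess_of_not hω).symm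
  have hKR : ∀ n : ℕ, ENNReal.ofReal (n * p n)
      ≤ dKR (P.map ζ) (P.map (perturbedProcess ζ X (Z n) n)) := fun n => by
    rw [ENNReal.ofReal_mul (Nat.cast_nonneg n), ENNReal.ofReal_natCast, ← hZlaw]
    refine natCast_mul_le_dKR_map_perturbedProcess hζmeas hXmeas (hZmeas n) ?_
    rw [hζ.lintegral_apply hζmeas .univ (measure_ne_top M _)]
    exact measure_ne_top M _
  refine ⟨hTV, hKR, fun hpn => ⟨?_, ?_⟩⟩
  · have hp0 : Tendsto p atTop (nhds 0) := by
      rw [show p = fun n : ℕ => (√(n : ℝ))⁻¹ from funext fun n => (hpn n).trans (one_div _)]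
      exact tendsto_inv_atTop_zero.comp (Real.tendsto_sqrt_atTop.comp tendsto_natCast_atTop_atTop)
    exact squeeze_zero (fun n => Real.iSup_nonneg fun _ => abs_nonneg _) hTV hp0
  · refine tendsto_nhds_top_mono (ENNReal.tendsto_ofReal_atTop.comp
      (Real.tendsto_sqrt_atTop.comp tendsto_natCast_atTop_atTop)) (Eventually.of_forall fun n => ?_)
    simpa only [Function.comp_apply, hpn, mul_one_div, Real.div_sqrt] using hKR n

/-- Let `ζ` be a Poisson process with finite intensity `M`, `(X_i)` i.i.d. with distribution
`M/M(Y)`, and for each `n` let `Z n` be a Bernoulli(`p n`) variable independent of everything.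
For `ζ_{n,p} = ζ + 1(Z_n = 1) Σ_{i<n} δ_{X_i}` one has `dTV(ζ, ζ_{n,p}) ≤ p n` and
`dKR(ζ, ζ_{n,p}) ≥ n · p n`; in particular, for `p n = 1/√n`, the total variation distance
tends to `0` while the Kantorovich–Rubinstein distance tends to `∞`. -/
theorem tv_vs_dKR_example {Ω Y : Type*} [MeasurableSpace Ω] [MeasurableSpace Y]
    (P : Measure Ω) [IsProbabilityMeasure P]
    (M : Measure Y) [IsFiniteMeasure M] (hM : M ≠ 0)
    (ζ : Ω → Measure Y) (hζmeas : Measurable ζ) (hζ : IsPoissonProcess P ζ M)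
    (X : ℕ → Ω → Y) (hXmeas : ∀ i, Measurable (X i))
    (hXlaw : ∀ i, P.map (X i) = (M Set.univ)⁻¹ • M)
    (hXiid : iIndepFun X P)
    (p : ℕ → ℝ) (hp : ∀ n, 0 < p n ∧ p n ≤ 1)
    (Z : ℕ → Ω → Bool) (hZmeas : ∀ n, Measurable (Z n))
    (hZlaw : ∀ n, P {ω | Z n ω = true} = ENNReal.ofReal (p n))
    (hindep₁ : ∀ n, IndepFun ζ (fun ω => (fun i => X i ω, Z n ω)) P)
    (hindep₂ : ∀ n, IndepFun (Z n) (fun ω => fun i => X i ω) P)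
    (ζnp : ℕ → Ω → Measure Y)
    (hζnp : ∀ n ω, ζnp n ω
      = ζ ω + (if Z n ω = true then ∑ i ∈ Finset.range n, Measure.dirac (X i ω) else 0)) :
    (∀ n, ppTV P ζ (ζnp n) ≤ p n) ∧
    (∀ n, ENNReal.ofReal (n * p n) ≤ dKR (P.map ζ) (P.map (ζnp n))) ∧
    ((∀ n, p n = 1 / Real.sqrt n) →
      (Tendsto (fun n => ppTV P ζ (ζnp n)) atTop (nhds 0) ∧
       Tendsto (fun n => dKR (P.map ζ) (P.map (ζnp n))) atTop (nhds ⊤))) :=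
  tv_vs_dKR_example_general P M ζ hζmeas hζ X hXmeas p hp Z hZmeas hZlaw ζnp hζnp
end

section
/- Let K ⊂ ℝ^d be a compact convex set of volume 1 and let B ⊆ K, Ã ⊆ [0, ã] be Borel sets with ã > 0. Then (1/2) ∫_K ∫_K 1((x+y)/2 ∈ B, ‖x−y‖ ∈ Ã) dx dy differs from (κ_d/2)·vol(B)·d·∫₀^∞ 1(r ∈ Ã) r^{d−1} dr by at most 2 C_K κ_d (ã^{d+1} + ã^{2d}), where C_K depends only on d and K and satisfies vol({x ∈ ℝ^d ∖ K : dist(x,K) ≤ ã}) ≤ C_K(ã + ã^d). -/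
/-!
Let `ν = vol ⊗ vol` and let `S` be the set of pairs `(y, x)` with midpoint in `B` and
`‖x - y‖ ∈ A`; the double integral is `ν (S ∩ K ×ˢ K)`. The map `(y, x) ↦ (x - y, (x + y) / 2)`
preserves `ν`, so `ν S = vol B · vol {u | ‖u‖ ∈ A}`, and polar coordinates turn the second factor
into `d κ_d ∫ 1_A(r) r^(d-1) dr`. A pair of `S` outside `K ×ˢ K` has a point outside `K` at
distance at most `‖x - y‖ / 2 ≤ ã` from the midpoint, which lies in `K`, and the other point in
the ball of radius `ã` around it; hence `ν (S \ K ×ˢ K) ≤ 2 vol(shell) κ_d ã^d`.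
-/

open MeasureTheory Metric Set Module

section OuterShell

variable {X : Type*} [PseudoMetricSpace X]

def outerShell (K : Set X) (a : ℝ) : Set X := {x | x ∉ K ∧ infDist x K ≤ a}

theorem IsClosed.measurableSet_outerShell [MeasurableSpace X] [OpensMeasurableSpace X]
    {K : Set X} (hK : IsClosed K) (a : ℝ) : MeasurableSet (outerShell K a) :=
  hK.measurableSet.compl.inter
    (measurableSet_le (continuous_infDist_pt K).measurable measurable_const)

theorem IsCompact.outerShell_subset_cthickening {K : Set X} (hK : IsCompact K)
    (hKne : K.Nonempty) (a : ℝ) : outerShell K a ⊆ cthickening a K := fun x hx =>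
  let ⟨y, hy, hxy⟩ := hK.exists_infDist_eq_dist hKne x
  mem_cthickening_of_dist_le x y a K hy (hxy ▸ hx.2)

theorem IsCompact.measure_outerShell_lt_top [ProperSpace X] [MeasurableSpace X]
    {μ : Measure X} [IsFiniteMeasureOnCompacts μ] {K : Set X} (hK : IsCompact K)
    (hKne : K.Nonempty) (a : ℝ) : μ (outerShell K a) < ⊤ :=
  (measure_mono (hK.outerShell_subset_cthickening hKne a)).trans_lt
    hK.cthickening.measure_lt_top

end OuterShell

theorem setIntegral_setIntegral_indicator_eq_measureReal {α β : Type*} [MeasurableSpace α]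
    [MeasurableSpace β] {μ : Measure α} {ν : Measure β} [SFinite μ] [SFinite ν]
    {S : Set (α × β)} (hS : MeasurableSet S) {s : Set α} {t : Set β}
    (hst : (μ.prod ν) (s ×ˢ t) ≠ ⊤) :
    ∫ x in s, ∫ y in t, {y | (x, y) ∈ S}.indicator (fun _ => (1 : ℝ)) y ∂ν ∂μ
      = (μ.prod ν).real (S ∩ s ×ˢ t) := by
  rw [← measureReal_restrict_apply hS, ← integral_indicator_one hS]
  exact (setIntegral_prod _ ((integrableOn_const (C := (1 : ℝ)) hst).indicator hS)).symm

section MidpointDiff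

variable {E : Type*} [NormedAddCommGroup E] [NormedSpace ℝ E]

/-- Pairs are ordered `p = (y, x)` to match the iterated integral `∫ y, ∫ x`. -/
def midpointDiffSet (B D : Set E) : Set (E × E) :=
  {p | (2 : ℝ)⁻¹ • (p.2 + p.1) ∈ B ∧ p.2 - p.1 ∈ D}

theorem infDist_le_norm_sub_of_smul_add_mem {K : Set E} {x y : E}
    (h : (2 : ℝ)⁻¹ • (x + y) ∈ K) : infDist x K ≤ ‖x - y‖ :=
  calc infDist x K ≤ dist x ((2 : ℝ)⁻¹ • (x + y)) := infDist_le_dist_of_mem h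
    _ = 2⁻¹ * ‖x - y‖ := by
      rw [dist_eq_norm, show x - (2 : ℝ)⁻¹ • (x + y) = (2 : ℝ)⁻¹ • (x - y) by module, norm_smul]
      norm_num
    _ ≤ ‖x - y‖ := by linarith [norm_nonneg (x - y)]

theorem midpointDiffSet_sdiff_prod_subset {K B D : Set E} (hBK : B ⊆ K) {a : ℝ}
    (hD : D ⊆ closedBall 0 a) :
    midpointDiffSet B D \ K ×ˢ K ⊆
      {p | p.1 ∈ outerShell K a ∧ p.2 - p.1 ∈ closedBall 0 a} ∪
        {p | p.2 ∈ outerShell K a ∧ p.1 - p.2 ∈ closedBall 0 a} := by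
  rintro ⟨y, x⟩ ⟨⟨hmid, hdiff⟩, hnotKK⟩
  have hxy : ‖x - y‖ ≤ a := mem_closedBall_zero_iff.1 (hD hdiff)
  have hyx : ‖y - x‖ ≤ a := norm_sub_rev x y ▸ hxy
  have hmidK : (2 : ℝ)⁻¹ • (x + y) ∈ K := hBK hmid
  by_cases hy : y ∈ K
  · have hx : x ∉ K := fun hx => hnotKK ⟨hy, hx⟩
    exact Or.inr ⟨⟨hx, (infDist_le_norm_sub_of_smul_add_mem hmidK).trans hxy⟩,
      mem_closedBall_zero_iff.2 hyx⟩
  · rw [add_comm] at hmidK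
    exact Or.inl ⟨⟨hy, (infDist_le_norm_sub_of_smul_add_mem hmidK).trans hyx⟩,
      mem_closedBall_zero_iff.2 hxy⟩

variable [MeasurableSpace E] [BorelSpace E] [FiniteDimensional ℝ E]
  (μ : Measure E) [μ.IsAddHaarMeasure]

theorem measurePreserving_sub_midpoint :
    MeasurePreserving (fun p : E × E => (p.2 - p.1, (2 : ℝ)⁻¹ • (p.2 + p.1)))
      (μ.prod μ) (μ.prod μ) := by
  have shear : MeasurePreserving (fun q : E × E => (q.1, (2 : ℝ)⁻¹ • q.1 + q.2))
      (μ.prod μ) (μ.prod μ) :=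
    (MeasurePreserving.id μ).skew_product (g := fun u y => (2 : ℝ)⁻¹ • u + y) (by fun_prop)
      (.of_forall fun u => map_add_left_eq_self μ _)
  convert shear.comp ((measurePreserving_sub_prod μ μ).comp Measure.measurePreserving_swap)
    using 2 with p
  simp only [Function.comp_apply, Prod.swap, Prod.mk.injEq, true_and]
  module

theorem measurableSet_midpointDiffSet {B D : Set E} (hB : MeasurableSet B)
    (hD : MeasurableSet D) : MeasurableSet (midpointDiffSet B D) :=
  (((measurable_snd.add measurable_fst).const_smul _) hB).inter
    ((measurable_snd.sub measurable_fst) hD)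

theorem measure_midpointDiffSet {B D : Set E} (hB : MeasurableSet B) (hD : MeasurableSet D) :
    (μ.prod μ) (midpointDiffSet B D) = μ D * μ B := by
  rw [← Measure.prod_prod, ← (measurePreserving_sub_midpoint μ).measure_preimage
    (hD.prod hB).nullMeasurableSet]
  exact congrArg _ (ext fun _ => and_comm)

theorem measureReal_midpointDiffSet {B D : Set E} (hB : MeasurableSet B)
    (hD : MeasurableSet D) : (μ.prod μ).real (midpointDiffSet B D) = μ.real D * μ.real B := by
  simp only [measureReal_def, measure_midpointDiffSet μ hB hD, ENNReal.toReal_mul]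

theorem measure_setOf_fst_mem_sub_mem {s t : Set E} (hs : MeasurableSet s)
    (ht : MeasurableSet t) : (μ.prod μ) {p | p.1 ∈ s ∧ p.2 - p.1 ∈ t} = μ s * μ t := by
  rw [← Measure.prod_prod, ← (measurePreserving_prod_sub μ μ).measure_preimage
    (hs.prod ht).nullMeasurableSet]
  rfl

theorem measure_setOf_snd_mem_sub_mem {s t : Set E} (hs : MeasurableSet s)
    (ht : MeasurableSet t) : (μ.prod μ) {p | p.2 ∈ s ∧ p.1 - p.2 ∈ t} = μ s * μ t := by
  rw [← Measure.prod_prod, ← (measurePreserving_prod_sub_swap μ μ).measure_preimage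
    (hs.prod ht).nullMeasurableSet]
  rfl

theorem measure_midpointDiffSet_sdiff_prod_le {K B D : Set E} (hK : IsClosed K) (hBK : B ⊆ K)
    {a : ℝ} (hD : D ⊆ closedBall 0 a) :
    (μ.prod μ) (midpointDiffSet B D \ K ×ˢ K)
      ≤ 2 * (μ (outerShell K a) * μ (closedBall 0 a)) := by
  have hshell := hK.measurableSet_outerShell a
  calc (μ.prod μ) (midpointDiffSet B D \ K ×ˢ K)
      ≤ (μ.prod μ) {p | p.1 ∈ outerShell K a ∧ p.2 - p.1 ∈ closedBall 0 a}
        + (μ.prod μ) {p | p.2 ∈ outerShell K a ∧ p.1 - p.2 ∈ closedBall 0 a} :=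
        (measure_mono (midpointDiffSet_sdiff_prod_subset hBK hD)).trans (measure_union_le _ _)
    _ = 2 * (μ (outerShell K a) * μ (closedBall 0 a)) := by
      rw [measure_setOf_fst_mem_sub_mem μ hshell measurableSet_closedBall,
        measure_setOf_snd_mem_sub_mem μ hshell measurableSet_closedBall, two_mul]

theorem abs_measureReal_midpointDiffSet_inter_prod_sub_le {K B D : Set E} (hK : IsCompact K)
    (hKne : K.Nonempty) (hB : MeasurableSet B) (hBK : B ⊆ K) {a : ℝ} (hDm : MeasurableSet D)
    (hD : D ⊆ closedBall 0 a) :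
    |(μ.prod μ).real (midpointDiffSet B D ∩ K ×ˢ K) - (μ.prod μ).real (midpointDiffSet B D)|
      ≤ 2 * μ.real (outerShell K a) * μ.real (closedBall 0 a) := by
  have hfin : (μ.prod μ) (midpointDiffSet B D) ≠ ⊤ := by
    rw [measure_midpointDiffSet μ hB hDm]
    exact ENNReal.mul_ne_top (measure_ne_top_of_subset hD measure_closedBall_lt_top.ne)
      (measure_ne_top_of_subset hBK hK.measure_lt_top.ne)
  have hshell_fin := (hK.measure_outerShell_lt_top (μ := μ) hKne a).ne
  have split := measureReal_inter_add_sdiff (μ := μ.prod μ) (s := midpointDiffSet B D)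
    (hK.isClosed.measurableSet.prod hK.isClosed.measurableSet) hfin
  have defect : (μ.prod μ).real (midpointDiffSet B D \ K ×ˢ K)
      ≤ 2 * μ.real (outerShell K a) * μ.real (closedBall 0 a) := by
    have := ENNReal.toReal_mono (ENNReal.mul_ne_top ENNReal.ofNat_ne_top
      (ENNReal.mul_ne_top hshell_fin measure_closedBall_lt_top.ne))
      (measure_midpointDiffSet_sdiff_prod_le μ hK.isClosed hBK hD)
    simpa [measureReal_def, mul_assoc] using this
  have lost_nonneg : 0 ≤ (μ.prod μ).real (midpointDiffSet B D \ K ×ˢ K) := measureReal_nonneg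
  rw [abs_sub_comm, abs_of_nonneg (by linarith)]
  linarith

theorem measureReal_setOf_norm_mem [Nontrivial E] {A : Set ℝ} (hA : MeasurableSet A) :
    μ.real {u | ‖u‖ ∈ A} = finrank ℝ E * μ.real (closedBall 0 1)
      * ∫ r in Ioi 0, A.indicator (fun r => r ^ (finrank ℝ E - 1)) r := by
  have polar := integral_fun_norm_addHaar μ (A.indicator fun _ => (1 : ℝ))
  have integrand (r : ℝ) : r ^ (finrank ℝ E - 1) • A.indicator (fun _ => (1 : ℝ)) r
      = A.indicator (fun r => r ^ (finrank ℝ E - 1)) r := by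
    by_cases hr : r ∈ A <;> simp [hr]
  simp only [← indicator_comp_right, Function.comp_def,
    integral_indicator_const _ (measurable_norm hA), integrand, smul_eq_mul, mul_one,
    nsmul_eq_mul] at polar
  have unit_ball : μ.real (closedBall (0 : E) 1) = μ.real (ball 0 1) := by
    simp only [measureReal_def, Measure.addHaar_unitClosedBall_eq_addHaar_unitBall]
  rw [unit_ball, mul_assoc]
  exact polar

theorem abs_integral_indicator_midpoint_sub_le [Nontrivial E] {K B : Set E} (hK : IsCompact K)
    (hKne : K.Nonempty) (hB : MeasurableSet B) (hBK : B ⊆ K) {A : Set ℝ} (hA : MeasurableSet A)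
    {a : ℝ} (hAa : A ⊆ Iic a) :
    |1 / 2 * ∫ y in K, ∫ x in K, {x | (2 : ℝ)⁻¹ • (x + y) ∈ B ∧ ‖x - y‖ ∈ A}.indicator
        (fun _ => (1 : ℝ)) x ∂μ ∂μ
      - μ.real (closedBall 0 1) / 2 * μ.real B * finrank ℝ E
        * ∫ r in Ioi 0, A.indicator (fun u => u ^ (finrank ℝ E - 1)) r|
      ≤ μ.real (outerShell K a) * μ.real (closedBall 0 a) := by
  set D := {u : E | ‖u‖ ∈ A}
  have hDm : MeasurableSet D := measurable_norm hA
  have hD : D ⊆ closedBall 0 a := fun u hu => mem_closedBall_zero_iff.2 (hAa hu)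
  have integral_eq : ∫ y in K, ∫ x in K, {x | (2 : ℝ)⁻¹ • (x + y) ∈ B ∧ ‖x - y‖ ∈ A}.indicator
      (fun _ => (1 : ℝ)) x ∂μ ∂μ = (μ.prod μ).real (midpointDiffSet B D ∩ K ×ˢ K) :=
    setIntegral_setIntegral_indicator_eq_measureReal (measurableSet_midpointDiffSet hB hDm)
      (hK.prod hK).measure_lt_top.ne
  have limit_eq : μ.real (closedBall 0 1) / 2 * μ.real B * finrank ℝ E
      * ∫ r in Ioi 0, A.indicator (fun u => u ^ (finrank ℝ E - 1)) r
      = 1 / 2 * (μ.prod μ).real (midpointDiffSet B D) := by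
    rw [measureReal_midpointDiffSet μ hB hDm, measureReal_setOf_norm_mem μ hA]
    ring
  rw [integral_eq, limit_eq, ← mul_sub, abs_mul, abs_of_pos one_half_pos]
  linarith [abs_measureReal_midpointDiffSet_inter_prod_sub_le μ hK hKne hB hBK hDm hD]

end MidpointDiff

theorem integral_midpoint_distance_approx_general
    {d : ℕ} (hd : 1 ≤ d) (K : Set (EuclideanSpace ℝ (Fin d)))
    (hKc : IsCompact K) (hKvol : volume K = 1)
    (B : Set (EuclideanSpace ℝ (Fin d))) (hB : MeasurableSet B) (hBK : B ⊆ K)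
    (atil : ℝ) (hatil : 0 < atil) (A : Set ℝ) (hA : MeasurableSet A)
    (hAsub : A ⊆ Set.Icc 0 atil)
    (CK : ℝ)
    (hshell : ∀ a : ℝ, 0 < a →
      (volume {x : EuclideanSpace ℝ (Fin d) | x ∉ K ∧ Metric.infDist x K ≤ a}).toReal
        ≤ CK * (a + a ^ d)) :
    |((1 : ℝ) / 2) * (∫ y in K, ∫ x in K,
        Set.indicator {x : EuclideanSpace ℝ (Fin d) |
          (2 : ℝ)⁻¹ • (x + y) ∈ B ∧ ‖x - y‖ ∈ A} (fun _ => (1 : ℝ)) x)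
      - ((volume (Metric.closedBall (0 : EuclideanSpace ℝ (Fin d)) 1)).toReal / 2)
          * (volume B).toReal * d
          * (∫ r in Set.Ioi (0 : ℝ), Set.indicator A (fun u => u ^ (d - 1)) r)|
      ≤ 2 * CK * (volume (Metric.closedBall (0 : EuclideanSpace ℝ (Fin d)) 1)).toReal
          * (atil ^ (d + 1) + atil ^ (2 * d)) := by
  have : Nonempty (Fin d) := ⟨⟨0, hd⟩⟩
  have hKne : K.Nonempty := nonempty_of_measure_ne_zero (μ := volume) (by simp [hKvol])
  have key := abs_integral_indicator_midpoint_sub_le volume hKc hKne hB hBK hA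
    (fun r hr => (hAsub hr).2)
  rw [Measure.addHaar_real_closedBall' _ _ hatil.le, finrank_euclideanSpace_fin] at key
  simp only [← measureReal_def] at hshell ⊢
  set κ := volume.real (closedBall (0 : EuclideanSpace ℝ (Fin d)) 1)
  have shell_le : volume.real (outerShell K atil) * (atil ^ d * κ)
      ≤ CK * κ * (atil ^ (d + 1) + atil ^ (2 * d)) := by
    calc _ ≤ CK * (atil + atil ^ d) * (atil ^ d * κ) := by gcongr; exact hshell atil hatil
      _ = _ := by ring
  have : 0 ≤ volume.real (outerShell K atil) * (atil ^ d * κ) := by positivity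
  linarith

/-- Quantitative comparison of the midpoint/distance integral over `K × K` with its
translation-invariant limit. `C_K` is any constant bounding the volume of the outer
parallel shell of `K`. -/
theorem integral_midpoint_distance_approx
    {d : ℕ} (hd : 1 ≤ d) (K : Set (EuclideanSpace ℝ (Fin d)))
    (hKc : IsCompact K) (hKconv : Convex ℝ K) (hKvol : volume K = 1)
    (B : Set (EuclideanSpace ℝ (Fin d))) (hB : MeasurableSet B) (hBK : B ⊆ K)
    (atil : ℝ) (hatil : 0 < atil) (A : Set ℝ) (hA : MeasurableSet A)
    (hAsub : A ⊆ Set.Icc 0 atil)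
    (CK : ℝ) (hCK : 0 < CK)
    (hshell : ∀ a : ℝ, 0 < a →
      (volume {x : EuclideanSpace ℝ (Fin d) | x ∉ K ∧ Metric.infDist x K ≤ a}).toReal
        ≤ CK * (a + a ^ d)) :
    |((1 : ℝ) / 2) * (∫ y in K, ∫ x in K,
        Set.indicator {x : EuclideanSpace ℝ (Fin d) |
          (2 : ℝ)⁻¹ • (x + y) ∈ B ∧ ‖x - y‖ ∈ A} (fun _ => (1 : ℝ)) x)
      - ((volume (Metric.closedBall (0 : EuclideanSpace ℝ (Fin d)) 1)).toReal / 2)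
          * (volume B).toReal * d
          * (∫ r in Set.Ioi (0 : ℝ), Set.indicator A (fun u => u ^ (d - 1)) r)|
      ≤ 2 * CK * (volume (Metric.closedBall (0 : EuclideanSpace ℝ (Fin d)) 1)).toReal
          * (atil ^ (d + 1) + atil ^ (2 * d)) :=
  integral_midpoint_distance_approx_general hd K hKc hKvol B hB hBK atil hatil A hA hAsub CK hshell
end
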